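/- Let ε ≥ 0 and c > 0 be real numbers, and let μ₁, μ₂ : Fin n → Fin m be assignments such that X(μ₁) ≥ (1−2ε)·X(μ₂). Then Y(μ₁) ≤ Y(μ₂) + 2ε·p_sum, and consequently c·p_sum + Y(μ₁) ≤ (1 + 2ε/c)·(c·p_sum + Y(μ₂)). -/
import Mathlib


open Finset

/-- The load of machine `i` under assignment `μ`. -/
def machineLoad {n m : ℕ} (p : Fin n → ℕ) (μ : Fin n → Fin m) (i : Fin m) : ℕ :=
  ∑ j ∈ univ.filter (fun j => μ j = i), p j

/-- The early work `X(μ)` with common due date `d`. -/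
def earlyWork {n m : ℕ} (p : Fin n → ℕ) (d : ℕ) (μ : Fin n → Fin m) : ℕ :=
  ∑ i : Fin m, min (machineLoad p μ i) d

/-- The late work `Y(μ)` with common due date `d`. -/
def lateWork {n m : ℕ} (p : Fin n → ℕ) (d : ℕ) (μ : Fin n → Fin m) : ℕ :=
  ∑ i : Fin m, (machineLoad p μ i - d)

lemma early_add_late {n m : ℕ} (p : Fin n → ℕ) (d : ℕ) (μ : Fin n → Fin m) :
    earlyWork p d μ + lateWork p d μ = ∑ j, p j := by
  have h1 : earlyWork p d μ + lateWork p d μ = ∑ i : Fin m, machineLoad p μ i := by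
    rw [earlyWork, lateWork, ← Finset.sum_add_distrib]
    exact Finset.sum_congr rfl fun i _ => by omega
  rw [h1]
  simp only [machineLoad]
  rw [← Finset.sum_fiberwise (g := μ) (f := p)]

/-- if `X(μ₁) ≥ (1−2ε)·X(μ₂)`, then `Y(μ₁) ≤ Y(μ₂) + 2ε·p_sum`, and
consequently `c·p_sum + Y(μ₁) ≤ (1 + 2ε/c)·(c·p_sum + Y(μ₂))`. -/
theorem early_to_late_approx {n m : ℕ} (p : Fin n → ℕ) (hp : ∀ j, 1 ≤ p j)
    (d : ℕ) (ε c : ℝ) (hε : 0 ≤ ε) (hc : 0 < c)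
    (μ₁ μ₂ : Fin n → Fin m)
    (h : (1 - 2 * ε) * (earlyWork p d μ₂ : ℝ) ≤ (earlyWork p d μ₁ : ℝ)) :
    (lateWork p d μ₁ : ℝ) ≤ (lateWork p d μ₂ : ℝ) + 2 * ε * ((∑ j, p j : ℕ) : ℝ) ∧
    c * ((∑ j, p j : ℕ) : ℝ) + (lateWork p d μ₁ : ℝ) ≤
      (1 + 2 * ε / c) * (c * ((∑ j, p j : ℕ) : ℝ) + (lateWork p d μ₂ : ℝ)) := by
  set P : ℝ := ((∑ j, p j : ℕ) : ℝ) with hP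
  have key : ∀ μ : Fin n → Fin m,
      (earlyWork p d μ : ℝ) + (lateWork p d μ : ℝ) = P := fun μ => by
    rw [hP, ← early_add_late p d μ]; push_cast; ring
  have hX2 : (earlyWork p d μ₂ : ℝ) ≤ P := by
    have := key μ₂; nlinarith [Nat.cast_nonneg (α := ℝ) (lateWork p d μ₂)]
  have h1 : (lateWork p d μ₁ : ℝ) ≤ (lateWork p d μ₂ : ℝ) + 2 * ε * P := by
    have k1 := key μ₁; have k2 := key μ₂; nlinarith
  refine ⟨h1, ?_⟩
  have h2 : 2 * ε * P ≤ 2 * ε / c * (c * P + (lateWork p d μ₂ : ℝ)) := by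
    rw [div_mul_eq_mul_div, le_div_iff₀ hc]
    nlinarith [Nat.cast_nonneg (α := ℝ) (lateWork p d μ₂)]
  nlinarith
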